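/- Let e₁, e₂, e₃ : ℝ² → (Fin 3 → ℝ) be twice continuously differentiable vector fields of (x,t) that at every point are orthonormal (eᵢ ⬝ eⱼ = δᵢⱼ) and satisfy e₁ × e₂ = e₃, e₂ × e₃ = e₁, e₃ × e₁ = e₂, and let k, σ, τ, ω₁, ω₂, ω₃ : ℝ² → ℝ be continuously differentiable functions such that the frame equations hold: ∂ₓe₁ = k e₂ − σ e₃, ∂ₓe₂ = −k e₁ + τ e₃, ∂ₓe₃ = σ e₁ − τ e₂, and ∂ₜe₁ = ω₃ e₂ − ω₂ e₃, ∂ₜe₂ = −ω₃ e₁ + ω₁ e₃, ∂ₜe₃ = ω₂ e₁ − ω₁ e₂. Then at every point: ∂ₜk − ∂ₓω₃ = e₃ ⬝ (∂ₓe₃ × ∂ₜe₃), ∂ₜσ − ∂ₓω₂ = e₂ ⬝ (∂ₓe₂ × ∂ₜe₂), and ∂ₜτ − ∂ₓω₁ = e₁ ⬝ (∂ₓe₁ × ∂ₜe₁). -/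

import Mathlib

open Matrix

/-- Partial derivative in the `i`-th coordinate direction of an
`ℝ³`-valued vector field on `ℝ²` (coordinates `(x, t)`). -/
noncomputable def pdv (i : Fin 2) (F : (Fin 2 → ℝ) → (Fin 3 → ℝ))
    (p : Fin 2 → ℝ) : Fin 3 → ℝ :=
  fderiv ℝ F p (Pi.single i 1)

/-- Partial derivative of a scalar function on `ℝ²`. -/
noncomputable def pd2 (i : Fin 2) (f : (Fin 2 → ℝ) → ℝ) (p : Fin 2 → ℝ) : ℝ :=
  fderiv ℝ f p (Pi.single i 1)

lemma fderiv_dot {f g : (Fin 2 → ℝ) → (Fin 3 → ℝ)} {p : Fin 2 → ℝ}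
    (hf : DifferentiableAt ℝ f p) (hg : DifferentiableAt ℝ g p) (v : Fin 2 → ℝ) :
    fderiv ℝ (fun q => f q ⬝ᵥ g q) p v =
      fderiv ℝ f p v ⬝ᵥ g p + f p ⬝ᵥ fderiv ℝ g p v := by
  have hfi := differentiableAt_pi.mp hf
  have hgi := differentiableAt_pi.mp hg
  have hfd : fderiv ℝ f p = ContinuousLinearMap.pi fun i => fderiv ℝ (fun q => f q i) p :=
    fderiv_pi hfi
  have hgd : fderiv ℝ g p = ContinuousLinearMap.pi fun i => fderiv ℝ (fun q => g q i) p :=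
    fderiv_pi hgi
  have : (fun q => f q ⬝ᵥ g q) = fun q => ∑ i, f q i * g q i := rfl
  rw [this, fderiv_fun_sum (A := fun i q => f q i * g q i) (fun i _ => (hfi i).mul (hgi i))]
  simp only [ContinuousLinearMap.coe_sum', Finset.sum_apply, dotProduct, hfd, hgd,
    ContinuousLinearMap.pi_apply]
  rw [← Finset.sum_add_distrib]
  refine Finset.sum_congr rfl fun i _ => ?_
  rw [fderiv_fun_mul (hfi i) (hgi i)]
  simp [mul_comm]
  ring
lemma pdv_diff {f : (Fin 2 → ℝ) → (Fin 3 → ℝ)} (hf : ContDiff ℝ 2 f) (i : Fin 2)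
    (p : Fin 2 → ℝ) : DifferentiableAt ℝ (pdv i f) p := by
  have h : Differentiable ℝ (fderiv ℝ f) :=
    (hf.fderiv_right (m := 1) le_rfl).differentiable one_ne_zero
  exact (h p).clm_apply (differentiableAt_const _)

lemma fderiv_pdv {f : (Fin 2 → ℝ) → (Fin 3 → ℝ)} (hf : ContDiff ℝ 2 f) (i j : Fin 2)
    (p : Fin 2 → ℝ) :
    fderiv ℝ (pdv i f) p (Pi.single j 1) =
      fderiv ℝ (fderiv ℝ f) p (Pi.single j 1) (Pi.single i 1) := by
  have h : Differentiable ℝ (fderiv ℝ f) :=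
    (hf.fderiv_right (m := 1) le_rfl).differentiable one_ne_zero
  have : pdv i f = fun q => (fderiv ℝ f q) ((fun _ : Fin 2 → ℝ => (Pi.single i 1 : Fin 2 → ℝ)) q) := rfl
  rw [this, fderiv_clm_apply (h p) (differentiableAt_const _)]
  simp

/-- symmetric second derivative gives the key swap. -/
lemma pdv_swap {f : (Fin 2 → ℝ) → (Fin 3 → ℝ)} (hf : ContDiff ℝ 2 f) (p : Fin 2 → ℝ) :
    fderiv ℝ (pdv 0 f) p (Pi.single 1 1) = fderiv ℝ (pdv 1 f) p (Pi.single 0 1) := by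
  rw [fderiv_pdv hf, fderiv_pdv hf]
  exact (hf.contDiffAt.isSymmSndFDerivAt minSmoothness_of_isRCLikeNormedField.le).eq _ _

lemma key {f g : (Fin 2 → ℝ) → (Fin 3 → ℝ)} (hf : ContDiff ℝ 2 f) (hg : ContDiff ℝ 2 g)
    {s w : (Fin 2 → ℝ) → ℝ}
    (hs : s = fun q => pdv 0 f q ⬝ᵥ g q) (hw : w = fun q => pdv 1 f q ⬝ᵥ g q)
    (p : Fin 2 → ℝ) :
    pd2 1 s p - pd2 0 w p = pdv 0 f p ⬝ᵥ pdv 1 g p - pdv 1 f p ⬝ᵥ pdv 0 g p := by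
  have hgd : ∀ q, DifferentiableAt ℝ g q := fun q => (hg.differentiable two_ne_zero) q
  have h1 : pd2 1 s p =
      fderiv ℝ (pdv 0 f) p (Pi.single 1 1) ⬝ᵥ g p + pdv 0 f p ⬝ᵥ pdv 1 g p := by
    rw [pd2, hs, fderiv_dot (pdv_diff hf 0 p) (hgd p)]; rfl
  have h2 : pd2 0 w p =
      fderiv ℝ (pdv 1 f) p (Pi.single 0 1) ⬝ᵥ g p + pdv 1 f p ⬝ᵥ pdv 0 g p := by
    rw [pd2, hw, fderiv_dot (pdv_diff hf 1 p) (hgd p)]; rfl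
  rw [h1, h2, pdv_swap hf]; ring

/-- Time part of the modified M-LXII compatibility equations in geometric
form, for an orthonormal right-handed moving frame satisfying the modified
M-LXI equations (β = 1).  Coordinate `0` is `x` and coordinate `1` is `t`. -/
theorem mMLXII_time_geometric_form
    (e₁ e₂ e₃ : (Fin 2 → ℝ) → (Fin 3 → ℝ))
    (he₁ : ContDiff ℝ 2 e₁) (he₂ : ContDiff ℝ 2 e₂) (he₃ : ContDiff ℝ 2 e₃)
    (hon : ∀ p, e₁ p ⬝ᵥ e₁ p = 1 ∧ e₂ p ⬝ᵥ e₂ p = 1 ∧ e₃ p ⬝ᵥ e₃ p = 1 ∧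
      e₁ p ⬝ᵥ e₂ p = 0 ∧ e₁ p ⬝ᵥ e₃ p = 0 ∧ e₂ p ⬝ᵥ e₃ p = 0)
    (hc₁ : ∀ p, crossProduct (e₁ p) (e₂ p) = e₃ p)
    (hc₂ : ∀ p, crossProduct (e₂ p) (e₃ p) = e₁ p)
    (hc₃ : ∀ p, crossProduct (e₃ p) (e₁ p) = e₂ p)
    (k σ τ ω₁ ω₂ ω₃ : (Fin 2 → ℝ) → ℝ)
    (hk : ContDiff ℝ 1 k) (hσ : ContDiff ℝ 1 σ) (hτ : ContDiff ℝ 1 τ)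
    (hω₁ : ContDiff ℝ 1 ω₁) (hω₂ : ContDiff ℝ 1 ω₂) (hω₃ : ContDiff ℝ 1 ω₃)
    (hx₁ : ∀ p, pdv 0 e₁ p = k p • e₂ p - σ p • e₃ p)
    (hx₂ : ∀ p, pdv 0 e₂ p = -(k p) • e₁ p + τ p • e₃ p)
    (hx₃ : ∀ p, pdv 0 e₃ p = σ p • e₁ p - τ p • e₂ p)
    (ht₁ : ∀ p, pdv 1 e₁ p = ω₃ p • e₂ p - ω₂ p • e₃ p)
    (ht₂ : ∀ p, pdv 1 e₂ p = -(ω₃ p) • e₁ p + ω₁ p • e₃ p)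
    (ht₃ : ∀ p, pdv 1 e₃ p = ω₂ p • e₁ p - ω₁ p • e₂ p) :
    ∀ p : Fin 2 → ℝ,
      pd2 1 k p - pd2 0 ω₃ p = e₃ p ⬝ᵥ crossProduct (pdv 0 e₃ p) (pdv 1 e₃ p) ∧
      pd2 1 σ p - pd2 0 ω₂ p = e₂ p ⬝ᵥ crossProduct (pdv 0 e₂ p) (pdv 1 e₂ p) ∧
      pd2 1 τ p - pd2 0 ω₁ p = e₁ p ⬝ᵥ crossProduct (pdv 0 e₁ p) (pdv 1 e₁ p) := by
  intro p
  -- orthonormality facts, at arbitrary points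
  have H := fun q => hon q
  -- scalar representation lemmas
  have hsk : k = fun q => pdv 0 e₁ q ⬝ᵥ e₂ q := by
    funext q; obtain ⟨h11, h22, h33, h12, h13, h23⟩ := hon q
    rw [hx₁ q]
    simp [sub_dotProduct, smul_dotProduct, h22, dotProduct_comm (e₃ q) (e₂ q), h23]
  have hsω₃ : ω₃ = fun q => pdv 1 e₁ q ⬝ᵥ e₂ q := by
    funext q; obtain ⟨h11, h22, h33, h12, h13, h23⟩ := hon q
    rw [ht₁ q]
    simp [sub_dotProduct, smul_dotProduct, h22, dotProduct_comm (e₃ q) (e₂ q), h23]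
  have hsσ : σ = fun q => pdv 0 e₃ q ⬝ᵥ e₁ q := by
    funext q; obtain ⟨h11, h22, h33, h12, h13, h23⟩ := hon q
    rw [hx₃ q]
    simp [sub_dotProduct, smul_dotProduct, h11, dotProduct_comm (e₂ q) (e₁ q), h12]
  have hsω₂ : ω₂ = fun q => pdv 1 e₃ q ⬝ᵥ e₁ q := by
    funext q; obtain ⟨h11, h22, h33, h12, h13, h23⟩ := hon q
    rw [ht₃ q]
    simp [sub_dotProduct, smul_dotProduct, h11, dotProduct_comm (e₂ q) (e₁ q), h12]
  have hsτ : τ = fun q => pdv 0 e₂ q ⬝ᵥ e₃ q := by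
    funext q; obtain ⟨h11, h22, h33, h12, h13, h23⟩ := hon q
    rw [hx₂ q]
    simp [add_dotProduct, smul_dotProduct, h33, h13]
  have hsω₁ : ω₁ = fun q => pdv 1 e₂ q ⬝ᵥ e₃ q := by
    funext q; obtain ⟨h11, h22, h33, h12, h13, h23⟩ := hon q
    rw [ht₂ q]
    simp [add_dotProduct, smul_dotProduct, h33, h13]
  obtain ⟨h11, h22, h33, h12, h13, h23⟩ := hon p
  have h21 : e₂ p ⬝ᵥ e₁ p = 0 := by rw [dotProduct_comm]; exact h12
  have h31 : e₃ p ⬝ᵥ e₁ p = 0 := by rw [dotProduct_comm]; exact h13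
  have h32 : e₃ p ⬝ᵥ e₂ p = 0 := by rw [dotProduct_comm]; exact h23
  have c21 : crossProduct (e₂ p) (e₁ p) = -(e₃ p) := by
    rw [← cross_anticomm (e₁ p) (e₂ p), hc₁ p]
  have c32 : crossProduct (e₃ p) (e₂ p) = -(e₁ p) := by
    rw [← cross_anticomm (e₂ p) (e₃ p), hc₂ p]
  have c13 : crossProduct (e₁ p) (e₃ p) = -(e₂ p) := by
    rw [← cross_anticomm (e₃ p) (e₁ p), hc₃ p]
  refine ⟨?_, ?_, ?_⟩
  · rw [key he₁ he₂ hsk hsω₃ p, hx₁ p, ht₂ p, ht₁ p, hx₂ p, hx₃ p, ht₃ p]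
    simp only [map_sub, _root_.map_smul, map_add, map_neg, LinearMap.sub_apply, LinearMap.add_apply,
      LinearMap.smul_apply, LinearMap.neg_apply, cross_self, hc₁ p, hc₂ p, hc₃ p, c21, c32, c13,
      sub_dotProduct, add_dotProduct, smul_dotProduct, dotProduct_sub, dotProduct_add,
      dotProduct_smul, neg_smul, neg_dotProduct, dotProduct_neg, smul_eq_mul, smul_neg, smul_zero,
      dotProduct_zero, h11, h22, h33, h12, h13, h23, h21, h31, h32]
    ring
  · rw [key he₃ he₁ hsσ hsω₂ p, hx₃ p, ht₁ p, ht₃ p, hx₁ p, hx₂ p, ht₂ p]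
    simp only [map_sub, _root_.map_smul, map_add, map_neg, LinearMap.sub_apply, LinearMap.add_apply,
      LinearMap.smul_apply, LinearMap.neg_apply, cross_self, hc₁ p, hc₂ p, hc₃ p, c21, c32, c13,
      sub_dotProduct, add_dotProduct, smul_dotProduct, dotProduct_sub, dotProduct_add,
      dotProduct_smul, neg_smul, neg_dotProduct, dotProduct_neg, smul_eq_mul, smul_neg, smul_zero,
      dotProduct_zero, h11, h22, h33, h12, h13, h23, h21, h31, h32]
    ring
  · rw [key he₂ he₃ hsτ hsω₁ p, hx₂ p, ht₃ p, ht₂ p, hx₃ p, hx₁ p, ht₁ p]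
    simp only [map_sub, _root_.map_smul, map_add, map_neg, LinearMap.sub_apply, LinearMap.add_apply,
      LinearMap.smul_apply, LinearMap.neg_apply, cross_self, hc₁ p, hc₂ p, hc₃ p, c21, c32, c13,
      sub_dotProduct, add_dotProduct, smul_dotProduct, dotProduct_sub, dotProduct_add,
      dotProduct_smul, neg_smul, neg_dotProduct, dotProduct_neg, smul_eq_mul, smul_neg, smul_zero,
      dotProduct_zero, h11, h22, h33, h12, h13, h23, h21, h31, h32]
    ring
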